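/- arXiv:1103.0419 — 3 statements merged into one kernel-verified Lean document; each statement's English description precedes it below -/
import Mathlib

section
/- In the algebra A[S⁷_q] (the quotient of A[H_q²] by the relation r² = 1), the columns of the 4×2 matrix u = [[q^{-1}z₁, -z₂*],[z₂, z₁*],[q^{-1}z₃, -z₄*],[z₄, z₃*]] are orthonormal: u*u = 1₂, i.e. ⟨φ_i|φ_j⟩ = δ_{ij} for i,j = 1,2 with respect to the Hermitian pairing ⟨ξ|η⟩ = Σ_j ξ_j* η_j. -/
/-- The defining relations of the q-deformed quaternion algebra `A[H_q]`
on a pair of generators. -/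
structure QuatRels (q : ℝ) {A : Type*} [Ring A] [Algebra ℝ A] [StarRing A]
    (z1 z2 : A) : Prop where
  r1 : z1 * z2 = q⁻¹ • (z2 * z1)
  r2 : star z2 * star z1 = q⁻¹ • (star z1 * star z2)
  r3 : z1 * star z2 = q • (star z2 * z1)
  r4 : z2 * star z1 = q • (star z1 * z2)
  r5 : z1 * star z1 = star z1 * z1
  r6 : star z2 * z2 - z2 * star z2 = (1 - (q ^ 2)⁻¹) • (z1 * star z1)

/-- The cross-relations between the two copies of `A[H_q]` inside `A[H_q²]`.
(Their conjugate relations follow by applying the star operation.) -/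
structure CrossRels (q : ℝ) {A : Type*} [Ring A] [Algebra ℝ A] [StarRing A]
    (z1 z2 z3 z4 : A) : Prop where
  c1 : z1 * z3 = Real.sqrt q • (z3 * z1)
  c2 : star z1 * z3 = (Real.sqrt q)⁻¹ • (z3 * star z1)
  c3 : z2 * z3 = Real.sqrt q • (z3 * z2)
  c4 : star z2 * z3 = (Real.sqrt q)⁻¹ • (z3 * star z2)
  c5 : z4 * z1 = Real.sqrt q • (z1 * z4)
  c6 : z1 * star z4 - (q - q⁻¹) • (star z2 * z3) = (Real.sqrt q)⁻¹ • (star z4 * z1)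
  c7 : z4 * z2 = Real.sqrt q • (z2 * z4)
  c8 : z2 * star z4 + (1 - (q ^ 2)⁻¹) • (star z1 * z3) = (Real.sqrt q)⁻¹ • (star z4 * z2)

/-- The defining relations of the coordinate algebra `A[S⁷_q]` of the quantum
seven-sphere: two copies of the q-quaternion relations, the cross-relations,
and the sphere relation `r² = 1`. -/
structure S7Rels (q : ℝ) {A : Type*} [Ring A] [Algebra ℝ A] [StarRing A]
    (z1 z2 z3 z4 : A) : Prop where
  quat12 : QuatRels q z1 z2
  quat34 : QuatRels q z3 z4
  cross : CrossRels q z1 z2 z3 z4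
  sphere : ((q ^ 2)⁻¹ • (z1 * star z1) + star z2 * z2) +
      ((q ^ 2)⁻¹ • (z3 * star z3) + star z4 * z4) = 1

open Matrix

/-- In `A[S⁷_q]`, the columns of the 4×2 matrix
`u = [[q⁻¹z₁, -z₂*],[z₂, z₁*],[q⁻¹z₃, -z₄*],[z₄, z₃*]]` are orthonormal:
`u*u = 1₂`. -/
theorem S7_u_isometry {A : Type*} [Ring A] [Algebra ℝ A] [StarRing A]
    [StarModule ℝ A] (q : ℝ) (hq : 0 < q) (z1 z2 z3 z4 : A)
    (h : S7Rels q z1 z2 z3 z4) :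
    ((!![q⁻¹ • z1, -(star z2);
         z2, star z1;
         q⁻¹ • z3, -(star z4);
         z4, star z3] : Matrix (Fin 4) (Fin 2) A)ᴴ *
      !![q⁻¹ • z1, -(star z2);
         z2, star z1;
         q⁻¹ • z3, -(star z4);
         z4, star z3]) = 1 := by
  obtain ⟨⟨r1,r2,r3,r4,r5,r6⟩, ⟨s1,s2,s3,s4,s5,s6⟩, _, sph⟩ := h
  ext i j
  fin_cases i <;> fin_cases j <;>
    simp [Matrix.mul_apply, Fin.sum_univ_four, Matrix.conjTranspose_apply,
      Matrix.one_apply, star_smul, smul_mul_assoc, mul_smul_comm, smul_smul]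
  · rw [r5, s5] at sph
    rw [← sph]; module
  · rw [r2, s2]; module
  · rw [r1, s1]; module
  · have h2 : z2 * star z2 = star z2 * z2 - (1 - (q ^ 2)⁻¹) • (z1 * star z1) := by
      rw [← r6]; abel
    have h4 : z4 * star z4 = star z4 * z4 - (1 - (q ^ 2)⁻¹) • (z3 * star z3) := by
      rw [← s6]; abel
    rw [h2, h4, ← sph]; module
end

section
/- In A[S⁷_q], the diagonal entries of p = uu* satisfy p₁₁ = p₂₂ and p₃₃ = p₄₄; explicitly, q^{-2}z₁z₁* + z₂*z₂ = z₂z₂* + z₁*z₁ and q^{-2}z₃z₃* + z₄*z₄ = z₄z₄* + z₃*z₃. Moreover p₁₁ + p₂₂ + p₃₃ + p₄₄ = 2. -/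
/-- In `A[S⁷_q]`, the diagonal entries of `p = uu*` satisfy `p₁₁ = p₂₂`,
`p₃₃ = p₄₄`, and `p₁₁ + p₂₂ + p₃₃ + p₄₄ = 2`. -/
theorem S7_diagonal_entries {A : Type*} [Ring A] [Algebra ℝ A] [StarRing A]
    [StarModule ℝ A] (q : ℝ) (hq : 0 < q) (z1 z2 z3 z4 : A)
    (h : S7Rels q z1 z2 z3 z4) :
    (q ^ 2)⁻¹ • (z1 * star z1) + star z2 * z2 = z2 * star z2 + star z1 * z1 ∧
    (q ^ 2)⁻¹ • (z3 * star z3) + star z4 * z4 = z4 * star z4 + star z3 * z3 ∧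
    ((q ^ 2)⁻¹ • (z1 * star z1) + star z2 * z2) + (z2 * star z2 + star z1 * z1) +
      ((q ^ 2)⁻¹ • (z3 * star z3) + star z4 * z4) + (z4 * star z4 + star z3 * z3)
        = 2 := by
  have key : ∀ a b : A, a * star a = star a * a →
      star b * b - b * star b = (1 - (q ^ 2)⁻¹) • (a * star a) →
      (q ^ 2)⁻¹ • (a * star a) + star b * b = b * star b + star a * a := by
    intro a b h5 h6
    have h6' : star b * b = b * star b + (1 - (q ^ 2)⁻¹) • (a * star a) :=
      sub_eq_iff_eq_add'.mp h6
    rw [← h5, h6', sub_smul, one_smul]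
    abel
  have e1 := key z1 z2 h.quat12.r5 h.quat12.r6
  have e2 := key z3 z4 h.quat34.r5 h.quat34.r6
  refine ⟨e1, e2, ?_⟩
  have hs := h.sphere
  calc ((q ^ 2)⁻¹ • (z1 * star z1) + star z2 * z2) + (z2 * star z2 + star z1 * z1) +
      ((q ^ 2)⁻¹ • (z3 * star z3) + star z4 * z4) + (z4 * star z4 + star z3 * z3)
      = (((q ^ 2)⁻¹ • (z1 * star z1) + star z2 * z2) +
          ((q ^ 2)⁻¹ • (z3 * star z3) + star z4 * z4)) +
        (((q ^ 2)⁻¹ • (z1 * star z1) + star z2 * z2) +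
          ((q ^ 2)⁻¹ • (z3 * star z3) + star z4 * z4)) := by
        rw [← e1, ← e2]; abel
    _ = 1 + 1 := by rw [hs]
    _ = 2 := one_add_one_eq_two
end

section
/- In the group algebra setting of A[U(1)] = C[t, t^{-1}] with t* = t^{-1}, the quotient of the augmentation ideal ker(ε) by the right ideal I generated by the three elements t² + q²t^{-2} - (1+q²), 𝔱(t - t^{-1}), and (q²t + t^{-1} - (q²+1))𝔱, where 𝔱 = q²t + t^{-1} - (q³+q^{-1}), is one-dimensional, spanned by the class of t - 1. -/
/-! Evaluation at `t = q` kills the three generators of `I`, so `t - 1 ∉ I`. Up to units, the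
generators are the polynomials `(t² - 1)(t² - q²)`, `(t - q)(q³t - 1)(t² - 1)` and
`(t - 1)(q²t - 1)(t - q)(q³t - 1)`, whose gcd is `(t - 1)(t - q)`; hence `(t - 1)(t - q) ∈ I`.
An element of `ker ε` vanishes at `t = 1`; subtracting the right multiple of `t - 1` makes it
vanish at `t = q` too, so that it becomes a multiple of `(t - 1)(t - q)`. -/

open LaurentPolynomial

/-- The counit `ε` of `A[U(1)] = ℂ[t,t⁻¹]`, sending every `tⁿ` to `1`. -/
noncomputable def U1counit : LaurentPolynomial ℂ →ₐ[ℂ] ℂ :=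
  AddMonoidAlgebra.lift ℂ ℂ ℤ (1 : Multiplicative ℤ →* ℂ)

namespace LaurentPolynomial

theorem T_one_mul_T_neg_one {R : Type*} [Semiring R] : (T 1 : R[T;T⁻¹]) * T (-1) = 1 := by
  rw [← T_add, add_neg_cancel, T_zero]

theorem T_one_mul_T_one_sub_T_neg_one {R : Type*} [CommRing R] :
    T 1 * (T 1 - T (-1)) = (T 1 ^ 2 - 1 : R[T;T⁻¹]) := by
  linear_combination -T_one_mul_T_neg_one (R := R)

variable {K : Type*} [Field K]

theorem T_sub_C_mul_T_sub_C_dvd {a b : Kˣ} (hab : a ≠ b) {f : K[T;T⁻¹]}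
    (ha : eval₂ (RingHom.id K) a f = 0) (hb : eval₂ (RingHom.id K) b f = 0) :
    (T 1 - C (a : K)) * (T 1 - C (b : K)) ∣ f := by
  obtain ⟨n, p, hp⟩ := exists_T_pow f
  have isRoot_of_eval₂ (c : Kˣ) (hc : eval₂ (RingHom.id K) c f = 0) : p.IsRoot c := by
    simpa [hp, hc] using (eval₂_toLaurent (RingHom.id K) c p).symm
  have hsub : IsUnit ((a : K) - b) := (sub_ne_zero.2 (Units.val_injective.ne hab)).isUnit
  have hdvd : (Polynomial.X - Polynomial.C (a : K)) * (Polynomial.X - Polynomial.C (b : K)) ∣ p :=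
    (Polynomial.isCoprime_X_sub_C_of_isUnit_sub hsub).mul_dvd
      (Polynomial.dvd_iff_isRoot.2 (isRoot_of_eval₂ a ha))
      (Polynomial.dvd_iff_isRoot.2 (isRoot_of_eval₂ b hb))
  have hf : f = Polynomial.toLaurent p * T (-n) := by
    rw [hp, mul_T_assoc, add_neg_cancel, T_zero, mul_one]
  rw [hf]
  refine Dvd.dvd.mul_right ?_ _
  simpa using map_dvd Polynomial.toLaurent hdvd

variable {I : Ideal K[T;T⁻¹]} {a : Kˣ}

theorem T_sub_one_notMem (ha : a ≠ 1) (hI : I ≤ RingHom.ker (eval₂ (RingHom.id K) a)) :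
    T 1 - 1 ∉ I := fun hmem => by
  have := hI hmem
  simp only [RingHom.mem_ker, map_sub, eval₂_T, zpow_one, map_one, sub_eq_zero] at this
  exact ha (Units.val_injective this)

theorem exists_sub_smul_T_sub_one_mem (ha : a ≠ 1) (hmem : (T 1 - 1) * (T 1 - C (a : K)) ∈ I)
    {x : K[T;T⁻¹]} (hx : eval₂ (RingHom.id K) 1 x = 0) :
    ∃ c : K, x - c • (T 1 - 1) ∈ I := by
  have ha' : (a : K) - 1 ≠ 0 := sub_ne_zero.2 (Units.val_injective.ne ha)
  refine ⟨eval₂ (RingHom.id K) a x / (a - 1), ?_⟩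
  obtain ⟨w, hw⟩ := T_sub_C_mul_T_sub_C_dvd ha.symm
    (f := x - (eval₂ (RingHom.id K) a x / (a - 1)) • (T 1 - 1))
    (by simp [smul_eq_C_mul, hx]) (by simp [smul_eq_C_mul]; field_simp; ring)
  rw [hw, Units.val_one, map_one]
  exact I.mul_mem_right w hmem

end LaurentPolynomial

theorem U1counit_apply (f : ℂ[T;T⁻¹]) : U1counit f = eval₂ (RingHom.id ℂ) 1 f := by
  induction f using LaurentPolynomial.induction_on' with
  | add p q hp hq => simp [hp, hq]
  | C_mul_T n a =>
    have : (T n : ℂ[T;T⁻¹]) = AddMonoidAlgebra.single n 1 := rfl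
    rw [map_mul, map_mul, this, U1counit, AddMonoidAlgebra.lift_single, C_eq_algebraMap,
      AlgHom.commutes]
    simp

namespace U1Calculus

variable {K : Type*} [Field K] (q : K)

noncomputable def frakt : K[T;T⁻¹] :=
  C (q ^ 2) * T 1 + T (-1) - C (q ^ 3 + q⁻¹)

noncomputable def calculusIdeal : Ideal K[T;T⁻¹] :=
  Ideal.span {T 2 + C (q ^ 2) * T (-2) - C (1 + q ^ 2),
    frakt q * (T 1 - T (-1)),
    (C (q ^ 2) * T 1 + T (-1) - C (q ^ 2 + 1)) * frakt q}

variable {q}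

theorem calculusIdeal_le_ker_eval₂ (hq : q ≠ 0) :
    calculusIdeal q ≤ RingHom.ker (eval₂ (RingHom.id K) (Units.mk0 q hq)) := by
  rw [calculusIdeal, Ideal.span_le]
  rintro x (rfl | rfl | rfl) <;>
  · simp only [frakt, SetLike.mem_coe, RingHom.mem_ker, map_sub, map_add, map_mul, eval₂_T,
      eval₂_C, RingHom.id_apply, zpow_neg, zpow_ofNat, Units.val_inv_eq_inv_val,
      Units.val_pow_eq_pow_val, Units.val_mk0]
    field_simp
    ring

theorem T_two_mul_first_generator : T 2 * (T 2 + C (q ^ 2) * T (-2) - C (1 + q ^ 2))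
    = (T 1 ^ 2 - 1) * (T 1 ^ 2 - C q ^ 2) := by
  rw [show (T 2 : K[T;T⁻¹]) = T 1 ^ 2 by rw [T_pow]; norm_num,
    show (T (-2) : K[T;T⁻¹]) = T (-1) ^ 2 by rw [T_pow]; norm_num]
  simp only [map_add, map_pow, map_one]
  linear_combination C q ^ 2 * (T 1 * T (-1) + 1) * T_one_mul_T_neg_one (R := K)

theorem C_mul_T_one_mul_frakt (hq : q ≠ 0) :
    C q * T 1 * frakt q = (T 1 - C q) * (C q ^ 3 * T 1 - 1) := by
  have hinv : C q * C q⁻¹ = 1 := by rw [← map_mul, mul_inv_cancel₀ hq, map_one]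
  simp only [frakt, map_add, map_pow]
  linear_combination C q * T_one_mul_T_neg_one (R := K) - T 1 * hinv

theorem T_one_mul_third_generator_factor : T 1 * (C (q ^ 2) * T 1 + T (-1) - C (q ^ 2 + 1))
    = (T 1 - 1) * (C q ^ 2 * T 1 - 1) := by
  simp only [map_add, map_pow, map_one]
  linear_combination T_one_mul_T_neg_one (R := K)

theorem T_sub_one_mul_T_sub_C_mem_calculusIdeal (hq : q ≠ 0)
    (hbezout : (q ^ 2 + 1) * (q ^ 3 + 1) * (q ^ 4 + 1) ≠ 0) :
    (T 1 - 1) * (T 1 - C q) ∈ calculusIdeal q := by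
  have g₁ : T 2 + C (q ^ 2) * T (-2) - C (1 + q ^ 2) ∈ calculusIdeal q :=
    Ideal.subset_span (Set.mem_insert _ _)
  have g₂ : frakt q * (T 1 - T (-1)) ∈ calculusIdeal q :=
    Ideal.subset_span (Set.mem_insert_of_mem _ (Set.mem_insert _ _))
  have g₃ : (C (q ^ 2) * T 1 + T (-1) - C (q ^ 2 + 1)) * frakt q ∈ calculusIdeal q :=
    Ideal.subset_span (Set.mem_insert_of_mem _ (Set.mem_insert_of_mem _ rfl))
  have m₁ : (T 1 ^ 2 - 1) * (T 1 ^ 2 - C q ^ 2) ∈ calculusIdeal q := by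
    rw [← T_two_mul_first_generator]
    exact Ideal.mul_mem_left _ _ g₁
  have m₂ : (T 1 - C q) * (C q ^ 3 * T 1 - 1) * (T 1 ^ 2 - 1) ∈ calculusIdeal q := by
    rw [← C_mul_T_one_mul_frakt hq, ← T_one_mul_T_one_sub_T_neg_one]
    convert Ideal.mul_mem_left _ (C q * T 1 * T 1) g₂ using 1
    ring
  have m₃ : (T 1 - 1) * (C q ^ 2 * T 1 - 1) * ((T 1 - C q) * (C q ^ 3 * T 1 - 1))
      ∈ calculusIdeal q := by
    rw [← C_mul_T_one_mul_frakt hq, ← T_one_mul_third_generator_factor]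
    convert Ideal.mul_mem_left _ (C q * T 1 * T 1) g₃ using 1
    ring
  -- `q³ m₁ - m₂ = (q⁴ + 1)(t² - 1)(t - q)`, and `-1` is not a root of `m₃`.
  have bezout : C ((q ^ 2 + 1) * (q ^ 3 + 1) * (q ^ 4 + 1)) * ((T 1 - 1) * (T 1 - C q))
      = C (q ^ 4 + 1) * ((T 1 - 1) * (C q ^ 2 * T 1 - 1) * ((T 1 - C q) * (C q ^ 3 * T 1 - 1)))
        - (C q ^ 5 * T 1 - C (q ^ 2 + q ^ 3 + q ^ 5))
          * (C q ^ 3 * ((T 1 ^ 2 - 1) * (T 1 ^ 2 - C q ^ 2))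
            - (T 1 - C q) * (C q ^ 3 * T 1 - 1) * (T 1 ^ 2 - 1)) := by
    simp only [map_add, map_mul, map_pow, map_one]
    ring
  have hunit : IsUnit (C ((q ^ 2 + 1) * (q ^ 3 + 1) * (q ^ 4 + 1)) : K[T;T⁻¹]) :=
    hbezout.isUnit.map C
  rw [← Ideal.unit_mul_mem_iff_mem _ hunit, bezout]
  exact Ideal.sub_mem _ (Ideal.mul_mem_left _ _ m₃) (Ideal.mul_mem_left _ _
    (Ideal.sub_mem _ (Ideal.mul_mem_left _ _ m₁) m₂))

end U1Calculus

/-- In `A[U(1)] = ℂ[t,t⁻¹]` (with `t* = t⁻¹`), the quotient of the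
augmentation ideal `ker ε` by the ideal `I` generated by
`t² + q²t⁻² - (1+q²)`, `𝔱(t - t⁻¹)` and `(q²t + t⁻¹ - (q²+1))𝔱`, where
`𝔱 = q²t + t⁻¹ - (q³+q⁻¹)`, is one-dimensional, spanned by the class of
`t - 1`: the class of `t - 1` is nonzero, and every element of `ker ε` is
congruent modulo `I` to a scalar multiple of `t - 1`. -/
theorem U1_calculus_one_dimensional (q : ℝ) (hq0 : 0 < q) (hq1 : q < 1) :
    let frakt : LaurentPolynomial ℂ :=
      C ((q : ℂ) ^ 2) * T 1 + T (-1) - C ((q : ℂ) ^ 3 + (q : ℂ)⁻¹)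
    let I : Ideal (LaurentPolynomial ℂ) :=
      Ideal.span {T 2 + C ((q : ℂ) ^ 2) * T (-2) - C (1 + (q : ℂ) ^ 2),
        frakt * (T 1 - T (-1)),
        (C ((q : ℂ) ^ 2) * T 1 + T (-1) - C ((q : ℂ) ^ 2 + 1)) * frakt}
    (T 1 - 1) ∉ I ∧
    (T 1 - 1) ∈ RingHom.ker U1counit.toRingHom ∧
    ∀ x ∈ RingHom.ker U1counit.toRingHom,
      ∃ c : ℂ, x - c • (T 1 - 1) ∈ I := by
  intro frakt I
  have hq : (q : ℂ) ≠ 0 := by exact_mod_cast hq0.ne'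
  have hq_ne_one : Units.mk0 (q : ℂ) hq ≠ 1 := by
    rw [Ne, Units.ext_iff, Units.val_mk0, Units.val_one]
    exact_mod_cast hq1.ne
  have hbezout : ((q : ℂ) ^ 2 + 1) * ((q : ℂ) ^ 3 + 1) * ((q : ℂ) ^ 4 + 1) ≠ 0 := by
    exact_mod_cast (by positivity : (0 : ℝ) < (q ^ 2 + 1) * (q ^ 3 + 1) * (q ^ 4 + 1)).ne'
  have mem_ker_iff (x : ℂ[T;T⁻¹]) :
      x ∈ RingHom.ker U1counit.toRingHom ↔ eval₂ (RingHom.id ℂ) 1 x = 0 := by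
    rw [RingHom.mem_ker, AlgHom.toRingHom_eq_coe, RingHom.coe_coe, U1counit_apply]
  refine ⟨T_sub_one_notMem hq_ne_one (U1Calculus.calculusIdeal_le_ker_eval₂ hq), ?_,
    fun x hx => ?_⟩
  · rw [mem_ker_iff]
    simp
  · exact exists_sub_smul_T_sub_one_mem hq_ne_one
      (U1Calculus.T_sub_one_mul_T_sub_C_mem_calculusIdeal hq hbezout) ((mem_ker_iff x).1 hx)
end
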